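/- Let C be a category. The canonical functor C → Ĉ into the sequential completion, sending an object X of C to the constant sequence X →id X →id X → ⋯, is fully faithful. -/

import Mathlib

/-!
STATEMENT 4: The canonical functor `C ⥤ Ĉ` into the sequential completion, sending an
object to the corresponding constant sequence, is fully faithful.
-/

open CategoryTheory CategoryTheory.Limits

universe v u

namespace SeqCompletion

def IsCauchy {C : Type u} [Category.{v} C] (X : ℕ ⥤ C) : Prop :=
  ∀ C' : C, ∃ n : ℕ, ∀ (i j : ℕ), n ≤ i → ∀ (hij : i ≤ j),
    Function.Bijective (fun g : C' ⟶ X.obj i => g ≫ X.map (homOfLE hij))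

variable (C : Type u) [Category.{v} C]

abbrev CauchCat := ObjectProperty.FullSubcategory (fun X : ℕ ⥤ C => IsCauchy X)

def evtInv : MorphismProperty (CauchCat C) := fun X _Y φ =>
  ∀ C' : C, ∃ n : ℕ, ∀ i : ℕ, n ≤ i →
    Function.Bijective (fun g : C' ⟶ X.obj.obj i =>
      g ≫ ((ObjectProperty.ι _).map φ).app i)

/-- The sequential completion `Ĉ = Cauch(ℕ, C)[S⁻¹]`. -/
abbrev Shat := (evtInv C).Localization

/-- The functor `C ⥤ Cauch(ℕ, C)` sending an object to the constant sequence. -/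
def constCauchy : C ⥤ CauchCat C :=
  ObjectProperty.lift _ (Functor.const ℕ) (fun X C' =>
    ⟨0, fun i j _ hij => by
      simp only [Functor.const_obj_obj, Functor.const_obj_map, Category.comp_id]
      exact Function.bijective_id⟩)

/-! ### Auxiliary machinery -/

section Aux

variable {C}

/-- A restatement of the `evtInv` property without the full subcategory inclusion. -/
lemma evtInv_iff {X Y : CauchCat C} (φ : X ⟶ Y) :
    evtInv C φ ↔ ∀ C' : C, ∃ n : ℕ, ∀ i : ℕ, n ≤ i →
      Function.Bijective (fun g : C' ⟶ X.obj.obj i => g ≫ φ.hom.app i) := Iff.rfl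

/-- An index function dominating `n`, the identity, and strictly monotone. -/
def idx (n : ℕ → ℕ) : ℕ → ℕ
  | 0 => n 0
  | i + 1 => max (n (i + 1)) (max (i + 1) (idx n i + 1))

lemma idx_mono (n : ℕ → ℕ) : Monotone (idx n) := by
  apply monotone_nat_of_le_succ
  intro i
  calc idx n i ≤ idx n i + 1 := Nat.le_succ _
    _ ≤ max (i + 1) (idx n i + 1) := le_max_right _ _
    _ ≤ idx n (i + 1) := le_max_right _ _

lemma le_idx (n : ℕ → ℕ) (i : ℕ) : i ≤ idx n i := by
  cases i with
  | zero => exact Nat.zero_le _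
  | succ i => exact le_trans (le_max_left _ _) (le_max_right _ _)

lemma apply_le_idx (n : ℕ → ℕ) (i : ℕ) : n i ≤ idx n i := by
  cases i with
  | zero => exact le_rfl
  | succ i => exact le_max_left _ _

lemma map_map (X : ℕ ⥤ C) {i j k : ℕ} (h1 : i ≤ j) (h2 : j ≤ k) :
    X.map (homOfLE h1) ≫ X.map (homOfLE h2) = X.map (homOfLE (h1.trans h2)) := by
  rw [← X.map_comp]
  exact congrArg X.map (Subsingleton.elim _ _)

lemma nat_app (X Y : ℕ ⥤ C) (φ : X ⟶ Y) {i j : ℕ} (h : i ≤ j) :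
    φ.app i ≫ Y.map (homOfLE h) = X.map (homOfLE h) ≫ φ.app j :=
  (φ.naturality (homOfLE h)).symm

lemma hom_ext {X Y : CauchCat C} {f g : X ⟶ Y} (h : ∀ i, f.hom.app i = g.hom.app i) : f = g :=
  InducedCategory.hom_ext (NatTrans.ext (funext h))

lemma comp_app {X Y Z : CauchCat C} (f : X ⟶ Y) (g : Y ⟶ Z) (i : ℕ) :
    (f ≫ g).hom.app i = f.hom.app i ≫ g.hom.app i := rfl

/-- Reindexing a functor `ℕ ⥤ C` along `idx n`. -/
def reFun (X : ℕ ⥤ C) (n : ℕ → ℕ) : ℕ ⥤ C where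
  obj i := X.obj (idx n i)
  map {i j} f := X.map (homOfLE (idx_mono n (leOfHom f)))
  map_id i := (congrArg X.map (Subsingleton.elim _ (𝟙 (idx n i)))).trans (X.map_id _)
  map_comp {i j k} f g := (congrArg X.map (Subsingleton.elim _ _)).trans (X.map_comp _ _)

/-- Reindexing a Cauchy sequence yields a Cauchy sequence. -/
def reObj (X : CauchCat C) (n : ℕ → ℕ) : CauchCat C :=
  ⟨reFun X.obj n, fun C' => by
    obtain ⟨m, hm⟩ := X.property C'
    exact ⟨m, fun i j hi hij =>
      hm (idx n i) (idx n j) (hi.trans (le_idx n i)) (idx_mono n hij)⟩⟩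

/-- The canonical map from a sequence to its reindexing. -/
def toRe (X : CauchCat C) (n : ℕ → ℕ) : X ⟶ reObj X n where
  hom.app i := X.obj.map (homOfLE (le_idx n i))
  hom.naturality i j f := by
    dsimp [reObj, reFun]
    rw [← X.obj.map_comp, ← X.obj.map_comp]
    exact congrArg X.obj.map (Subsingleton.elim _ _)

lemma toRe_app (X : CauchCat C) (n : ℕ → ℕ) (i : ℕ) :
    (toRe X n).hom.app i = X.obj.map (homOfLE (le_idx n i)) := rfl

lemma toRe_mem (X : CauchCat C) (n : ℕ → ℕ) : evtInv C (toRe X n) := fun C' => by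
  obtain ⟨m, hm⟩ := X.property C'
  exact ⟨m, fun i hi => hm i (idx n i) hi (le_idx n i)⟩

instance : (evtInv C).IsMultiplicative where
  id_mem X := fun C' =>
    ⟨0, fun i _ => by
      have : (fun g : C' ⟶ X.obj.obj i =>
          g ≫ ((ObjectProperty.ι _).map (𝟙 X)).app i) = id := by
        funext g
        exact Category.comp_id g
      rw [this]
      exact Function.bijective_id⟩
  comp_mem f g hf hg := fun C' => by
    obtain ⟨m, hm⟩ := hf C'
    obtain ⟨m', hm'⟩ := hg C'
    refine ⟨max m m', fun i hi => ?_⟩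
    have h1 := hm i (le_trans (le_max_left _ _) hi)
    have h2 := hm' i (le_trans (le_max_right _ _) hi)
    have := h2.comp h1
    convert this using 1
    funext x
    exact (Category.assoc _ _ _).symm

instance : (evtInv C).HasLeftCalculusOfFractions where
  exists_leftFraction X Y φ := by
    obtain ⟨A, s, hs, f, rfl⟩ := φ.cases
    classical
    rw [evtInv_iff] at hs
    -- thresholds for eventual invertibility of `s`
    let thr : C → ℕ := fun C' => (hs C').choose
    have thr_spec : ∀ (C' : C) (i : ℕ), thr C' ≤ i →
        Function.Bijective (fun g : C' ⟶ A.obj.obj i => g ≫ s.hom.app i) :=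
      fun C' i hi => (hs C').choose_spec i hi
    set n : ℕ → ℕ := fun i => max (thr (X.obj.obj i)) (thr (A.obj.obj i)) with hn
    have hnX : ∀ i, thr (X.obj.obj i) ≤ idx n i :=
      fun i => le_trans (le_max_left _ _) (apply_le_idx n i)
    have hnA : ∀ i, thr (A.obj.obj i) ≤ idx n i :=
      fun i => le_trans (le_max_right _ _) (apply_le_idx n i)
    -- lift of the transition map of `X` along `s`
    have hsurj : ∀ i : ℕ, ∃ h : X.obj.obj i ⟶ A.obj.obj (idx n i),
        h ≫ s.hom.app (idx n i) = X.obj.map (homOfLE (le_idx n i)) :=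
      fun i => (thr_spec (X.obj.obj i) (idx n i) (hnX i)).surjective
        (X.obj.map (homOfLE (le_idx n i)))
    choose h hh using hsurj
    -- naturality of the lifts
    have hnat : ∀ (i j : ℕ) (hij : i ≤ j),
        h i ≫ A.obj.map (homOfLE (idx_mono n hij)) = X.obj.map (homOfLE hij) ≫ h j := by
      intro i j hij
      apply (thr_spec (X.obj.obj i) (idx n j) ((hnX i).trans (idx_mono n hij))).injective
      dsimp only
      rw [Category.assoc, ← nat_app A.obj X.obj s.hom (idx_mono n hij), ← Category.assoc, hh i,
        map_map, Category.assoc, hh j, map_map]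
    -- the numerator `g : X ⟶ reObj Y n`
    refine ⟨⟨⟨{ app := fun i => h i ≫ f.hom.app (idx n i)
                naturality := fun i j hij => ?_ }⟩, toRe Y n, toRe_mem Y n⟩, ?_⟩
    · dsimp [reObj, reFun]
      rw [Category.assoc, nat_app A.obj Y.obj f.hom (idx_mono n (leOfHom hij)),
        ← Category.assoc, ← Category.assoc,
        hnat i j (leOfHom hij), Subsingleton.elim hij (homOfLE (leOfHom hij))]
    · -- f ≫ toRe Y n = s ≫ g
      apply hom_ext
      intro i
      rw [comp_app, comp_app]
      dsimp only [toRe_app]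
      have hsh : s.hom.app i ≫ h i = A.obj.map (homOfLE (le_idx n i)) := by
        apply (thr_spec (A.obj.obj i) (idx n i) (hnA i)).injective
        dsimp only
        rw [Category.assoc, hh i, nat_app _ _ s.hom (le_idx n i)]
      change f.hom.app i ≫ Y.obj.map (homOfLE (le_idx n i)) = s.hom.app i ≫ h i ≫ f.hom.app (idx n i)
      rw [nat_app _ _ f.hom (le_idx n i), ← Category.assoc, ← hsh, Category.assoc]
  ext X' X Y f₁ f₂ s hs hf := by
    classical
    rw [evtInv_iff] at hs
    let thr : C → ℕ := fun C' => (hs C').choose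
    have thr_spec : ∀ (C' : C) (i : ℕ), thr C' ≤ i →
        Function.Bijective (fun g : C' ⟶ X'.obj.obj i => g ≫ s.hom.app i) :=
      fun C' i hi => (hs C').choose_spec i hi
    set n : ℕ → ℕ := fun i => thr (X.obj.obj i) with hn
    refine ⟨reObj Y n, toRe Y n, toRe_mem Y n, ?_⟩
    apply hom_ext
    intro i
    rw [comp_app, comp_app]
    dsimp only [toRe_app]
    obtain ⟨h, hh⟩ := (thr_spec (X.obj.obj i) (idx n i) (apply_le_idx n i)).surjective
      (X.obj.map (homOfLE (le_idx n i)))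
    have key : s.hom.app (idx n i) ≫ f₁.hom.app (idx n i) = s.hom.app (idx n i) ≫ f₂.hom.app (idx n i) :=
      congrArg (fun ψ => ψ.hom.app (idx n i)) hf
    change f₁.hom.app i ≫ Y.obj.map (homOfLE (le_idx n i)) = f₂.hom.app i ≫ Y.obj.map (homOfLE (le_idx n i))
    rw [nat_app _ _ f₁.hom (le_idx n i), nat_app _ _ f₂.hom (le_idx n i), ← hh,
      Category.assoc, Category.assoc, key]

end Aux

/-- The canonical functor `C ⥤ Ĉ` is fully faithful. -/
theorem constCauchy_comp_Q_full_and_faithful :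
    (constCauchy C ⋙ (evtInv C).Q).Full ∧ (constCauchy C ⋙ (evtInv C).Q).Faithful := by
  constructor
  · refine ⟨fun {X Y} φ => ?_⟩
    obtain ⟨ψ, rfl⟩ := Localization.exists_leftFraction (evtInv C).Q (evtInv C) φ
    obtain ⟨m, hm⟩ := (evtInv_iff ψ.s).mp ψ.hs X
    obtain ⟨g, hg'⟩ : ∃ g : X ⟶ Y, (fun g : X ⟶ Y => g ≫ ψ.s.hom.app m) g = ψ.f.hom.app m :=
      (hm m le_rfl).surjective (ψ.f.hom.app m)
    have hg : g ≫ ψ.s.hom.app m = ψ.f.hom.app m := hg'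
    refine ⟨g, ?_⟩
    have hiso := Localization.inverts (evtInv C).Q (evtInv C) ψ.s ψ.hs
    rw [← cancel_mono ((evtInv C).Q.map ψ.s)]
    rw [MorphismProperty.LeftFraction.map_comp_map_s]
    have : (constCauchy C ⋙ (evtInv C).Q).map g ≫ (evtInv C).Q.map ψ.s
        = (evtInv C).Q.map ((constCauchy C).map g ≫ ψ.s) :=
      ((evtInv C).Q.map_comp _ _).symm
    rw [this]
    rw [MorphismProperty.map_eq_iff_postcomp (evtInv C).Q (evtInv C)]
    -- equalize by the reindexing map with constant shift `m`
    refine ⟨reObj ψ.Y' (fun _ => m), toRe ψ.Y' (fun _ => m), toRe_mem _ _, ?_⟩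
    apply hom_ext
    intro i
    have hmle : m ≤ idx (fun _ => m) i := idx_mono (fun _ => m) (Nat.zero_le i)
    have stable : ∀ j, m ≤ j → g ≫ ψ.s.hom.app j = ψ.f.hom.app j := by
      intro j hj
      have e1 : ψ.s.hom.app m ≫ ψ.Y'.obj.map (homOfLE hj) = ψ.s.hom.app j := by
        rw [nat_app _ _ ψ.s.hom hj]
        exact Category.id_comp _
      have e2 : ψ.f.hom.app m ≫ ψ.Y'.obj.map (homOfLE hj) = ψ.f.hom.app j := by
        rw [nat_app _ _ ψ.f.hom hj]
        exact Category.id_comp _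
      exact (congrArg (fun t => g ≫ t) e1).symm.trans ((Category.assoc _ _ _).symm.trans
        ((congrArg (fun t => t ≫ ψ.Y'.obj.map (homOfLE hj)) hg).trans e2))
    rw [comp_app, comp_app, comp_app]
    dsimp only [toRe_app]
    have capp : ((constCauchy C).map g).hom.app i = g := rfl
    have e1 : ψ.s.hom.app i ≫ ψ.Y'.obj.map (homOfLE (le_idx (fun _ => m) i))
        = ψ.s.hom.app (idx (fun _ => m) i) := by
      rw [nat_app _ _ ψ.s.hom (le_idx (fun _ => m) i)]
      exact Category.id_comp _
    have e2 : ψ.f.hom.app i ≫ ψ.Y'.obj.map (homOfLE (le_idx (fun _ => m) i))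
        = ψ.f.hom.app (idx (fun _ => m) i) := by
      rw [nat_app _ _ ψ.f.hom (le_idx (fun _ => m) i)]
      exact Category.id_comp _
    rw [capp]
    exact (Category.assoc _ _ _).trans ((congrArg (fun t => g ≫ t) e1).trans ((stable _ hmle).trans e2.symm))
  · refine ⟨fun {X Y} f g hfg => ?_⟩
    have h : (evtInv C).Q.map ((constCauchy C).map f)
        = (evtInv C).Q.map ((constCauchy C).map g) := hfg
    rw [MorphismProperty.map_eq_iff_postcomp (evtInv C).Q (evtInv C)] at h
    obtain ⟨Z, t, ht, e⟩ := h
    obtain ⟨m, hm⟩ := (evtInv_iff t).mp ht X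
    apply (hm m le_rfl).injective
    exact congrArg (fun ψ => ψ.hom.app m) e

end SeqCompletion
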